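/- arXiv:2302.11221 — 4 statements merged into one kernel-verified Lean document; each statement's English description precedes it below -/
import Mathlib

section
/- Let k ≥ 1 and m ≥ 0 be integers, and work in the ring of polynomials in N variables x_1,…,x_N over ℚ with N ≥ k+m. Then e_k · h_m = ∑_{j=k}^{k+m} C(j,k) · p_{k+m}^{(j)}, where C(j,k) is the ordinary binomial coefficient. -/
/-!
Expanding the product, `e_k h_m` is the sum of `x^t x^u` over `k`-subsets `t` and degree-`m`
monomials `u`. A monomial `x^s` of degree `k + m` arises once for each `k`-subset `t` of its
support (with `u = s - t`), so its coefficient is `C(j, k)` where `j` is the number of distinct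
variables in `s`, i.e. the length of the partition `λ` with `x^s` a term of `m_λ`.
-/

open MvPolynomial

/-- `p_n^{(r)}`: the sum of the monomial symmetric polynomials `m_λ` over the
partitions `λ` of `n` of length `r` (in `N` variables, over `ℚ`).
For `r = 0` this automatically gives `δ_{n,0}`. -/
noncomputable def pnr (N n r : ℕ) : MvPolynomial (Fin N) ℚ :=
  ∑ μ ∈ Finset.univ.filter (fun μ : Nat.Partition n => μ.parts.card = r),
    msymm (Fin N) ℚ μ

open Finset

namespace Nat.Partition

theorem card_parts_le {n : ℕ} (μ : n.Partition) : μ.parts.card ≤ n := by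
  simpa [μ.parts_sum] using Multiset.card_nsmul_le_sum (s := μ.parts) (a := 1)
    fun _ hi => μ.parts_pos hi

theorem card_parts_ofSym {n : ℕ} {σ : Type*} [DecidableEq σ] (s : Sym σ n) :
    (ofSym s).parts.card = s.val.toFinset.card := by
  simp [ofSym, Multiset.toFinset]

end Nat.Partition

namespace MvPolynomial

variable {σ R : Type*} [Fintype σ] [DecidableEq σ] [CommSemiring R]

theorem prod_X_mul_hsymm (a : Multiset σ) {k : ℕ} (ha : a.card = k) (m : ℕ) :
    (a.map X).prod * hsymm σ R m =
      ∑ s : Sym σ (k + m) with a ≤ s.val, (s.val.map X).prod := by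
  rw [hsymm, mul_sum]
  refine sum_bij' (fun u _ => ⟨a + u.val, by simp [ha]⟩)
    (fun s hs => ⟨s.val - a, ?_⟩) (fun u _ => mem_filter.2 ⟨mem_univ _, Multiset.le_add_right _ _⟩)
    (fun _ _ => mem_univ _) ?_ ?_ ?_
  · have hle : a ≤ s.val := (mem_filter.1 hs).2
    rw [Multiset.card_sub hle, s.2, ha, Nat.add_sub_cancel_left]
  · exact fun u _ => Sym.ext (add_tsub_cancel_left _ _)
  · exact fun s hs => Sym.ext (add_tsub_cancel_of_le (mem_filter.1 hs).2)
  · intro u _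
    simp only [Multiset.map_add, Multiset.prod_add]

theorem esymm_mul_hsymm (k m : ℕ) :
    esymm σ R k * hsymm σ R m =
      ∑ s : Sym σ (k + m), s.val.toFinset.card.choose k • (s.val.map X).prod := by
  calc esymm σ R k * hsymm σ R m
      = ∑ t ∈ powersetCard k univ, ∑ s : Sym σ (k + m) with t.val ≤ s.val,
          (s.val.map X).prod := by
        rw [esymm, sum_mul]
        exact sum_congr rfl fun t ht => prod_X_mul_hsymm _ (mem_powersetCard.1 ht).2 m
    _ = ∑ s : Sym σ (k + m), ∑ _t ∈ powersetCard k s.val.toFinset, (s.val.map X).prod := by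
        refine sum_comm' fun t s => ?_
        have hsub : t ⊆ s.val.toFinset ↔ t.val ≤ s.val := by
          rw [← val_le_iff, Multiset.toFinset_val, t.nodup.le_dedup_iff_le]
        simp only [mem_powersetCard, mem_filter, mem_univ, true_and, subset_univ, hsub]
        tauto
    _ = _ := by simp only [sum_const, card_powersetCard]

theorem sum_mul_msymm {n : ℕ} (c : n.Partition → MvPolynomial σ R) :
    ∑ μ, c μ * msymm σ R μ = ∑ s : Sym σ n, c (.ofSym s) * (s.val.map X).prod := by
  simp only [msymm, mul_sum]
  rw [← Fintype.sum_fiberwise fun s : Sym σ n => Nat.Partition.ofSym s]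
  refine sum_congr rfl fun μ _ => sum_congr rfl fun s _ => ?_
  rw [s.2]

end MvPolynomial

theorem sum_range_mul_pnr {N n : ℕ} (c : ℕ → MvPolynomial (Fin N) ℚ) :
    ∑ j ∈ range (n + 1), c j * pnr N n j =
      ∑ μ : n.Partition, c μ.parts.card * msymm (Fin N) ℚ μ := by
  simp only [pnr, mul_sum]
  rw [← sum_fiberwise_of_maps_to (g := fun μ : n.Partition => μ.parts.card)
    fun μ _ => mem_range_succ_iff.2 μ.card_parts_le]
  exact sum_congr rfl fun j _ => sum_congr rfl fun μ hμ => by rw [(mem_filter.1 hμ).2]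

theorem esymm_mul_hsymm_eq_sum_pnr_general (k m N : ℕ) :
    esymm (Fin N) ℚ k * hsymm (Fin N) ℚ m =
      ∑ j ∈ Finset.Icc k (k + m),
        (j.choose k : MvPolynomial (Fin N) ℚ) * pnr N (k + m) j := by
  have hIcc : ∑ j ∈ Icc k (k + m), (j.choose k : MvPolynomial (Fin N) ℚ) * pnr N (k + m) j =
      ∑ j ∈ range (k + m + 1), (j.choose k : MvPolynomial (Fin N) ℚ) * pnr N (k + m) j := by
    refine sum_subset (fun j hj => ?_) fun j _ hj => ?_
    · simp only [mem_Icc, mem_range] at hj ⊢; omega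
    · simp only [mem_Icc, mem_range] at *
      rw [Nat.choose_eq_zero_of_lt (by omega), Nat.cast_zero, zero_mul]
  rw [hIcc, sum_range_mul_pnr, sum_mul_msymm, esymm_mul_hsymm]
  simp only [Nat.Partition.card_parts_ofSym, nsmul_eq_mul]

/-- for `k ≥ 1`, `m ≥ 0` and `N ≥ k + m` variables,
`e_k · h_m = ∑_{j=k}^{k+m} C(j,k) · p_{k+m}^{(j)}`. -/
theorem esymm_mul_hsymm_eq_sum_pnr (k m N : ℕ) (hk : 1 ≤ k) (hN : k + m ≤ N) :
    esymm (Fin N) ℚ k * hsymm (Fin N) ℚ m =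
      ∑ j ∈ Finset.Icc k (k + m),
        (j.choose k : MvPolynomial (Fin N) ℚ) * pnr N (k + m) j :=
  esymm_mul_hsymm_eq_sum_pnr_general k m N
end

section
/- Let r ≥ 0 be an integer and work over ℚ in N variables. As formal power series in t with coefficients in the polynomial ring, r! · E(t) · ∑_{n≥r} p_n^{(r)} (−1)^{n−r} t^{n−r} = D^r E(t), where D^r is the r-th formal derivative with respect to t. -/
open MvPolynomial PowerSeries

/-- `E(t) = ∑_{m ≥ 0} e_m t^m`, as a formal power series with coefficients in
the polynomial ring in `N` variables over `ℚ`. -/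
noncomputable def Eser (N : ℕ) : PowerSeries (MvPolynomial (Fin N) ℚ) :=
  PowerSeries.mk fun m => esymm (Fin N) ℚ m

/-! Since `D^r E` has `m`-th coefficient `r! * C(m+r, r) * e_{m+r}`, the claim amounts to
`∑_{a+b=m} (-1)^b e_a p_{b+r}^{(r)} = C(m+r, r) e_{m+r}`.
Write `e_a` as the sum of the squarefree monomials `x^A` with `|A| = a`, and `p_{b+r}^{(r)}` as the
sum of the monomials `x^v` with `|v| = b + r` and `|supp v| = r`. The product `x^A x^v` is the
monomial of `u = A + v`, and for fixed `u` of degree `m + r` the sets `A` that occur are those with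
`A ≤ u` and `|supp (u - A)| = r`. Their signed count vanishes as soon as some variable `i` occurs
at least twice in `u`, since adding or removing `i` from `A` does not change `supp (u - A)`;
for squarefree `u` they are exactly the `m`-subsets of `supp u`, which gives `C(m+r, r)`. -/

open Finset

theorem sum_antidiagonal_sum_powersetCard {α M : Type*} [AddCommMonoid M] (s : Finset α) (m : ℕ)
    (f : Finset α → ℕ → M) :
    ∑ p ∈ antidiagonal m, ∑ A ∈ powersetCard p.1 s, f A p.2 =
      ∑ A ∈ s.powerset with A.card ≤ m, f A (m - A.card) := by
  rw [Nat.sum_antidiagonal_eq_sum_range_succ_mk,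
    ← sum_fiberwise_of_maps_to (g := card) (t := range (m + 1))
      (fun A hA => mem_range_succ_iff.mpr (mem_filter.mp hA).2)]
  refine sum_congr rfl fun k hk => ?_
  have hkm : k ≤ m := mem_range_succ_iff.mp hk
  rw [powersetCard_eq_filter, filter_filter]
  refine sum_congr (filter_congr fun A _ => ?_) fun A hA => ?_
  · constructor <;> intro <;> omega
  · rw [(mem_filter.mp hA).2.2]

section Multiset

variable {σ : Type*} [DecidableEq σ]

theorem card_le_of_card_toFinset_sub_eq {u a : Multiset σ} {m r : ℕ}
    (hu : Multiset.card u = m + r) (ha : a ≤ u) (h : (u - a).toFinset.card = r) :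
    Multiset.card a ≤ m := by
  have := Multiset.toFinset_card_le (u - a)
  have := Multiset.card_le_card ha
  rw [Multiset.card_sub ha, hu] at *
  omega

theorem toFinset_sub_cons_of_one_lt_count {u a : Multiset σ} {i : σ} (hi : i ∉ a)
    (h : 1 < u.count i) : (u - i ::ₘ a).toFinset = (u - a).toFinset := by
  have hia := Multiset.count_eq_zero.mpr hi
  ext j
  simp only [Multiset.mem_toFinset, ← Multiset.count_pos, Multiset.count_sub, Multiset.count_cons]
  split_ifs with hj
  · subst hj; omega
  · omega

variable [Fintype σ]

variable (σ) in
noncomputable def multisetsOfCard (n : ℕ) : Finset (Multiset σ) :=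
  (univ : Finset (Sym σ n)).map ⟨Sym.toMultiset, Sym.coe_injective⟩

@[simp]
theorem mem_multisetsOfCard {n : ℕ} {u : Multiset σ} :
    u ∈ multisetsOfCard σ n ↔ Multiset.card u = n :=
  ⟨fun h => by obtain ⟨s, -, rfl⟩ := Finset.mem_map.mp h; exact s.2,
    fun h => Finset.mem_map.mpr ⟨⟨u, h⟩, mem_univ _, rfl⟩⟩

theorem sum_multisetsOfCard_filter_add {M : Type*} [AddCommMonoid M] (a : Multiset σ) (n : ℕ)
    (p : Multiset σ → Prop) [DecidablePred p] (f : Multiset σ → M) :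
    ∑ v ∈ multisetsOfCard σ n with p v, f (a + v) =
      ∑ u ∈ multisetsOfCard σ (Multiset.card a + n) with a ≤ u ∧ p (u - a), f u := by
  refine sum_nbij' (a + ·) (· - a) (fun v hv => ?_) (fun u hu => ?_) (fun v _ => ?_)
    (fun u hu => ?_) fun _ _ => rfl
  · simp only [mem_filter, mem_multisetsOfCard] at hv ⊢
    simp [hv]
  · simp only [mem_filter, mem_multisetsOfCard] at hu ⊢
    obtain ⟨hcard, hle, hp⟩ := hu
    exact ⟨by rw [Multiset.card_sub hle]; omega, hp⟩
  · exact add_tsub_cancel_left a v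
  · exact add_tsub_cancel_of_le (mem_filter.mp hu).2.1

theorem filter_val_le_and_card_toFinset_sub_eq_of_nodup {u : Multiset σ} {m r : ℕ}
    (hnd : u.Nodup) (hu : Multiset.card u = m + r) :
    ({A : Finset σ | A.val ≤ u ∧ (u - A.val).toFinset.card = r} : Finset (Finset σ)) =
      powersetCard m u.toFinset := by
  ext A
  have hsub : A.val ≤ u ↔ A ⊆ u.toFinset := by
    rw [Multiset.le_iff_subset A.nodup, ← Multiset.toFinset_subset, Finset.val_toFinset]
  simp only [mem_filter, mem_univ, true_and, mem_powersetCard, ← hsub]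
  refine and_congr_right fun ha => ?_
  have hcard := Multiset.card_le_card ha
  rw [Multiset.toFinset_card_of_nodup (Multiset.nodup_of_le (Multiset.sub_le_self _ _) hnd),
    Multiset.card_sub ha, hu]
  simp only [card_val] at hcard ⊢
  omega

end Multiset

section Symmetric

variable {σ R : Type*} [Fintype σ] [DecidableEq σ]

theorem sum_msymm_parts_card_eq_sum_multisetsOfCard [CommSemiring R] (n r : ℕ) :
    ∑ μ : n.Partition with μ.parts.card = r, msymm σ R μ =
      ∑ u ∈ multisetsOfCard σ n with u.toFinset.card = r, (u.map MvPolynomial.X).prod := by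
  have h : ∀ μ : n.Partition,
      msymm σ R μ = ∑ s : Sym σ n with .ofSym s = μ, (s.1.map MvPolynomial.X).prod := by
    intro μ
    rw [msymm]
    symm
    apply sum_subtype
    simp
  rw [sum_congr rfl fun μ _ => h μ, sum_fiberwise_eq_sum_filter, multisetsOfCard, filter_map,
    sum_map]
  refine sum_congr (filter_congr fun s _ => ?_) fun _ _ => rfl
  simp [Nat.Partition.ofSym, Multiset.toFinset]

theorem esymm_eq_sum_multisetsOfCard_nodup [CommSemiring R] (n : ℕ) :
    esymm σ R n = ∑ u ∈ multisetsOfCard σ n with u.Nodup, (u.map MvPolynomial.X).prod := by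
  have h : (multisetsOfCard σ n).filter Multiset.Nodup =
      (powersetCard n univ).map ⟨Finset.val, val_injective⟩ := by
    ext u
    simp only [mem_filter, mem_multisetsOfCard, mem_map, mem_powersetCard_univ]
    exact ⟨fun ⟨hn, hu⟩ => ⟨⟨u, hu⟩, hn, rfl⟩, by rintro ⟨A, rfl, rfl⟩; exact ⟨rfl, A.nodup⟩⟩
  rw [h, sum_map]
  rfl

variable [CommRing R]

theorem sum_neg_one_pow_eq_zero_of_one_lt_count {u : Multiset σ} {m r : ℕ} {i : σ}
    (hu : Multiset.card u = m + r) (hi : 1 < u.count i) :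
    ∑ A : Finset σ with A.val ≤ u ∧ (u - A.val).toFinset.card = r, (-1 : R) ^ (m - A.card) = 0 := by
  have hiu : i ∈ u := Multiset.count_pos.mp (by omega)
  rw [sum_filter, ← powerset_univ, ← insert_erase (mem_univ i),
    sum_powerset_insert (notMem_erase i univ), ← sum_add_distrib]
  refine sum_eq_zero fun A hA => ?_
  have hiA : i ∉ A := fun h => notMem_erase i univ (mem_powerset.mp hA h)
  have hcons := card_le_of_card_toFinset_sub_eq (a := i ::ₘ A.val) hu
  rw [insert_val_of_notMem hiA, card_insert_of_notMem hiA]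
  simp only [Multiset.cons_le_of_notMem hiA, toFinset_sub_cons_of_one_lt_count hiA hi, hiu,
    true_and] at hcons ⊢
  split_ifs with h
  · have hm := hcons h.1 h.2
    rw [Multiset.card_cons, card_val] at hm
    rw [show m - A.card = m - (A.card + 1) + 1 by omega, pow_succ]
    ring
  · rw [add_zero]

theorem sum_neg_one_pow_sub_card {u : Multiset σ} {m r : ℕ} (hu : Multiset.card u = m + r) :
    ∑ A : Finset σ with A.val ≤ u ∧ (u - A.val).toFinset.card = r, (-1 : R) ^ (m - A.card) =
      if u.Nodup then ((m + r).choose r : R) else 0 := by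
  split_ifs with hnd
  · rw [filter_val_le_and_card_toFinset_sub_eq_of_nodup hnd hu,
      sum_congr rfl fun A hA => by rw [(mem_powersetCard.mp hA).2, Nat.sub_self, pow_zero],
      sum_const, card_powersetCard, Multiset.toFinset_card_of_nodup hnd, hu, nsmul_one,
      Nat.choose_symm_add]
  · obtain ⟨i, hi⟩ : ∃ i, 1 < u.count i := by
      simpa [Multiset.nodup_iff_count_le_one] using hnd
    exact sum_neg_one_pow_eq_zero_of_one_lt_count hu hi

theorem sum_antidiagonal_esymm_mul_sum_msymm (m r : ℕ) :
    ∑ p ∈ antidiagonal m, esymm σ R p.1 *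
        ((-1) ^ p.2 * ∑ μ : (p.2 + r).Partition with μ.parts.card = r, msymm σ R μ) =
      (m + r).choose r * esymm σ R (m + r) := by
  calc _ = ∑ p ∈ antidiagonal m, ∑ A ∈ powersetCard p.1 univ, (-1) ^ p.2 *
          ∑ v ∈ multisetsOfCard σ (p.2 + r) with v.toFinset.card = r,
            ((A.val + v).map MvPolynomial.X).prod := by
        refine sum_congr rfl fun p _ => ?_
        rw [sum_msymm_parts_card_eq_sum_multisetsOfCard, esymm, sum_mul]
        refine sum_congr rfl fun A _ => ?_
        simp only [mul_sum, Multiset.map_add, Multiset.prod_add]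
        refine sum_congr rfl fun v _ => ?_
        rw [Finset.prod_eq_multiset_prod]
        ring
    _ = ∑ A : Finset σ with A.card ≤ m, (-1) ^ (m - A.card) *
          ∑ v ∈ multisetsOfCard σ (m - A.card + r) with v.toFinset.card = r,
            ((A.val + v).map MvPolynomial.X).prod := by
        rw [sum_antidiagonal_sum_powersetCard univ m fun (A : Finset σ) b =>
          (-1 : MvPolynomial σ R) ^ b *
            ∑ v ∈ multisetsOfCard σ (b + r) with v.toFinset.card = r,
              ((A.val + v).map MvPolynomial.X).prod, powerset_univ]
    _ = ∑ A : Finset σ with A.card ≤ m, (-1) ^ (m - A.card) *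
          ∑ u ∈ multisetsOfCard σ (m + r) with A.val ≤ u ∧ (u - A.val).toFinset.card = r,
            (u.map MvPolynomial.X).prod := by
        refine sum_congr rfl fun A hA => ?_
        have hAm := (mem_filter.mp hA).2
        rw [sum_multisetsOfCard_filter_add A.val _ (fun v => v.toFinset.card = r)
          (fun u => (u.map MvPolynomial.X).prod), card_val,
          show A.card + (m - A.card + r) = m + r by omega]
    _ = ∑ u ∈ multisetsOfCard σ (m + r),
          (∑ A : Finset σ with A.val ≤ u ∧ (u - A.val).toFinset.card = r, (-1) ^ (m - A.card)) *
            (u.map MvPolynomial.X).prod := by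
        simp only [mul_sum, sum_mul]
        refine sum_comm' fun A u => ?_
        simp only [mem_filter, mem_univ, true_and, mem_multisetsOfCard]
        constructor
        · rintro ⟨-, hu, hle, hr⟩
          exact ⟨⟨hle, hr⟩, hu⟩
        · rintro ⟨⟨hle, hr⟩, hu⟩
          exact ⟨card_le_of_card_toFinset_sub_eq hu hle hr, hu, hle, hr⟩
    _ = ∑ u ∈ multisetsOfCard σ (m + r),
          if u.Nodup then ((m + r).choose r : MvPolynomial σ R) * (u.map MvPolynomial.X).prod
          else 0 := by
        refine sum_congr rfl fun u hu => ?_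
        rw [sum_neg_one_pow_sub_card (mem_multisetsOfCard.mp hu), ite_mul, zero_mul]
    _ = _ := by rw [← sum_filter, ← mul_sum, esymm_eq_sum_multisetsOfCard_nodup]

end Symmetric

/-- `r! · E(t) · ∑_{n≥r} p_n^{(r)} (−1)^{n−r} t^{n−r} = D^r E(t)`,
where `D` is the formal derivative with respect to `t` and the series
`∑_{n≥r} p_n^{(r)} (−1)^{n−r} t^{n−r}` is written as `∑_{m≥0} (−1)^m p_{m+r}^{(r)} t^m`. -/
theorem factorial_mul_E_mul_genfun_eq_deriv (N r : ℕ) :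
    (r.factorial : PowerSeries (MvPolynomial (Fin N) ℚ)) * Eser N *
        (PowerSeries.mk fun m => (-1 : MvPolynomial (Fin N) ℚ) ^ m * pnr N (m + r) r) =
      PowerSeries.derivativeFun^[r] (Eser N) := by
  ext m : 1
  change _ = coeff m ((d⁄dX _)^[r] (Eser N))
  rw [coeff_iterate_derivative, Nat.ascFactorial_eq_factorial_mul_choose, mul_assoc,
    ← map_natCast PowerSeries.C, PowerSeries.coeff_C_mul, PowerSeries.coeff_mul]
  simp only [Eser, pnr, PowerSeries.coeff_mk]
  rw [sum_antidiagonal_esymm_mul_sum_msymm]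
  push_cast
  ring
end

section
/- Let r ≥ 1 be an integer. Let (P_n)_{n≥r} be the unique family in ℚ(q) satisfying, for all n ≥ r, ∑_{k=r}^n (−1)^{k−r} a_{n−k} P_k = C(n,r) a_n, and let (Q_m)_{m≥1} be the unique family in ℚ(q) satisfying, for all m ≥ 1, ∑_{k=1}^m (−1)^{k−1} a_{m−k} Q_k = [m]_{q^r} a_m, where [m]_{q^r} = 1 + q^r + q^{2r} + ⋯ + q^{(m−1)r}. Then for every n ≥ r+1, P_n = ((1−q^r)/r!) · q^{C(r,2)} · Q_{n−r}. -/
noncomputable section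

/-- The field `ℚ(q)`. -/
abbrev K : Type := RatFunc ℚ

/-- The indeterminate `q`. -/
def qq : K := RatFunc.X

/-- `[m]_x = 1 + x + ⋯ + x^{m-1}`. -/
def qNat (x : K) (m : ℕ) : K := ∑ i ∈ Finset.range m, x ^ i

/-- `a_m = q^{C(m,2)}/m!` in `ℚ(q)`. -/
def aa (m : ℕ) : K := qq ^ m.choose 2 / (m.factorial : K)

instance : CharZero K := charZero_of_injective_algebraMap (algebraMap ℚ K).injective

lemma aa_zero : aa 0 = 1 := by simp [aa]

lemma choose2_add (m r : ℕ) : (m + r).choose 2 = m.choose 2 + r.choose 2 + m * r := by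
  induction m with
  | zero => simp
  | succ n ih =>
    have h : n + 1 + r = (n + r) + 1 := by ring
    rw [h, Nat.choose_succ_succ, Nat.choose_one_right, ih,
        Nat.choose_succ_succ n, Nat.choose_one_right]
    ring

lemma aa_key (r m : ℕ) :
    aa m * aa r - (1 - qq ^ r) / (r.factorial : K) * qq ^ r.choose 2 * (qNat (qq ^ r) m * aa m)
      = (((m + r).choose r : ℕ) : K) * aa (m + r) := by
  have hfr : (r.factorial : K) ≠ 0 := Nat.cast_ne_zero.mpr r.factorial_ne_zero
  have hfm : (m.factorial : K) ≠ 0 := Nat.cast_ne_zero.mpr m.factorial_ne_zero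
  have hfmr : ((m + r).factorial : K) ≠ 0 := Nat.cast_ne_zero.mpr (m + r).factorial_ne_zero
  have hgeom : (1 - qq ^ r) * qNat (qq ^ r) m = 1 - qq ^ (r * m) := by
    have h := geom_sum_mul (qq ^ r) m
    unfold qNat
    rw [← pow_mul] at h
    linear_combination -h
  have hcast : (((m + r).choose r : ℕ) : K) * (r.factorial : K) * (m.factorial : K)
      = ((m + r).factorial : K) := by
    have h := Nat.choose_mul_factorial_mul_factorial (Nat.le_add_left r m)
    rw [Nat.add_sub_cancel] at h
    exact_mod_cast congrArg (Nat.cast : ℕ → K) h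
  have hpow : qq ^ m.choose 2 * qq ^ r.choose 2 * qq ^ (r * m) = qq ^ ((m + r).choose 2) := by
    rw [← pow_add, ← pow_add, choose2_add]; ring_nf
  have h1 : aa m * aa r - (1 - qq ^ r) / (r.factorial : K) * qq ^ r.choose 2 * (qNat (qq ^ r) m * aa m)
      = qq ^ m.choose 2 * qq ^ r.choose 2 * (1 - (1 - qq ^ r) * qNat (qq ^ r) m)
          / ((m.factorial : K) * (r.factorial : K)) := by
    unfold aa; field_simp
  rw [h1, hgeom, show (1 - (1 - qq ^ (r * m))) = qq ^ (r * m) by ring, hpow]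
  unfold aa
  field_simp
  linear_combination -qq ^ ((m + r).choose 2) * hcast

/-- let `r ≥ 1`; let `(P_n)` satisfy, for all `n ≥ r`,
`∑_{k=r}^n (−1)^{k−r} a_{n−k} P_k = C(n,r) a_n`, and let `(Q_m)` satisfy, for all
`m ≥ 1`, `∑_{k=1}^m (−1)^{k−1} a_{m−k} Q_k = [m]_{q^r} a_m`.  Then for every
`n ≥ r + 1`, `P_n = ((1−q^r)/r!) q^{C(r,2)} Q_{n−r}`. -/
theorem specialized_pnr_eq_qr_power_sum (r : ℕ) (hr : 1 ≤ r) (P Q : ℕ → K)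
    (hP : ∀ n, r ≤ n →
      ∑ k ∈ Finset.Icc r n, (-1 : K) ^ (k - r) * aa (n - k) * P k = (n.choose r : K) * aa n)
    (hQ : ∀ m, 1 ≤ m →
      ∑ k ∈ Finset.Icc 1 m, (-1 : K) ^ (k - 1) * aa (m - k) * Q k = qNat (qq ^ r) m * aa m) :
    ∀ n, r + 1 ≤ n →
      P n = (1 - qq ^ r) / (r.factorial : K) * qq ^ r.choose 2 * Q (n - r) := by
  set c : K := (1 - qq ^ r) / (r.factorial : K) * qq ^ r.choose 2 with hc
  have hPr : P r = aa r := by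
    have h := hP r le_rfl
    rw [Finset.Icc_self, Finset.sum_singleton] at h
    simpa [aa_zero] using h
  set P' : ℕ → K := fun n => if n ≤ r then P n else c * Q (n - r) with hP'def
  have hP' : ∀ n, r ≤ n →
      ∑ k ∈ Finset.Icc r n, (-1 : K) ^ (k - r) * aa (n - k) * P' k = (n.choose r : K) * aa n := by
    intro n hn
    rcases eq_or_lt_of_le hn with h | h
    · subst h
      rw [Finset.Icc_self, Finset.sum_singleton]
      have hpp : P' r = P r := if_pos le_rfl
      rw [hpp]
      have h := hP r le_rfl
      rw [Finset.Icc_self, Finset.sum_singleton] at h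
      exact h
    · set m := n - r with hm
      have hm1 : 1 ≤ m := by omega
      have hnm : n = m + r := by omega
      have hsplit : Finset.Icc r n = insert r (Finset.Icc (r + 1) n) := by
        ext x; simp only [Finset.mem_Icc, Finset.mem_insert]; omega
      rw [hsplit, Finset.sum_insert (by simp)]
      have hmap : Finset.Icc (r + 1) n = (Finset.Icc 1 m).map (addRightEmbedding r) := by
        rw [Finset.map_add_right_Icc]
        congr 1
        omega
      rw [hmap, Finset.sum_map]
      have hterm : ∀ j ∈ Finset.Icc 1 m,
          (-1 : K) ^ ((addRightEmbedding r) j - r) * aa (n - (addRightEmbedding r) j) *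
            P' ((addRightEmbedding r) j)
          = -((-1 : K) ^ (j - 1) * aa (m - j) * (c * Q j)) := by
        intro j hj
        simp only [Finset.mem_Icc] at hj
        simp only [addRightEmbedding_apply]
        have h1 : j + r - r = j := by omega
        have h2 : n - (j + r) = m - j := by omega
        have h3 : ¬(j + r ≤ r) := by omega
        have h5 : P' (j + r) = c * Q j := by
          show (if j + r ≤ r then P (j + r) else c * Q (j + r - r)) = c * Q j
          rw [if_neg h3, h1]
        have hsign : (-1 : K) ^ j = -(-1 : K) ^ (j - 1) := by
          have hj' : j = (j - 1) + 1 := by omega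
          rw [hj']; simp [pow_succ]
        rw [h1, h2, h5, hsign]; ring
      rw [Finset.sum_congr rfl hterm, Finset.sum_neg_distrib]
      have hsum : ∑ j ∈ Finset.Icc 1 m, (-1 : K) ^ (j - 1) * aa (m - j) * (c * Q j)
          = c * (qNat (qq ^ r) m * aa m) := by
        rw [← hQ m hm1, Finset.mul_sum]
        exact Finset.sum_congr rfl fun j _ => by ring
      rw [hsum]
      have hpp : P' r = P r := if_pos le_rfl
      have key := aa_key r m
      rw [hpp, hPr]
      have e0 : n - r = m := hm.symm
      rw [Nat.sub_self, pow_zero, one_mul, e0, hnm]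
      linear_combination key
  -- uniqueness: P n = P' n for all n ≥ r
  have main : ∀ n, r ≤ n → P n = P' n := by
    intro n
    induction n using Nat.strong_induction_on with
    | _ n ih =>
      intro hn
      have e1 := hP n hn
      have e2 := hP' n hn
      have hdiff : ∑ k ∈ Finset.Icc r n, (-1 : K) ^ (k - r) * aa (n - k) * (P k - P' k) = 0 := by
        have : ∑ k ∈ Finset.Icc r n, (-1 : K) ^ (k - r) * aa (n - k) * (P k - P' k)
            = (∑ k ∈ Finset.Icc r n, (-1 : K) ^ (k - r) * aa (n - k) * P k)
              - ∑ k ∈ Finset.Icc r n, (-1 : K) ^ (k - r) * aa (n - k) * P' k := by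
          rw [← Finset.sum_sub_distrib]
          exact Finset.sum_congr rfl fun k _ => by ring
        rw [this, e1, e2, sub_self]
      rw [Finset.sum_eq_single n (fun k hk hkn => by
        have hk' := Finset.mem_Icc.mp hk
        have : P k = P' k := ih k (lt_of_le_of_ne hk'.2 hkn) hk'.1
        rw [this, sub_self, mul_zero]) (fun hnn => absurd (Finset.mem_Icc.mpr ⟨hn, le_rfl⟩) hnn)]
        at hdiff
      have hne : ((-1 : K) ^ (n - r) * aa (n - n)) ≠ 0 := by
        rw [Nat.sub_self, aa_zero, mul_one]; exact pow_ne_zero _ (by norm_num)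
      have := (mul_eq_zero.mp hdiff).resolve_left hne
      exact sub_eq_zero.mp this
  intro n hn
  have h1 := main n (by omega)
  have h2 : P' n = c * Q (n - r) := if_neg (by omega)
  rw [h1, h2]

end
end

section
/- For all integers n > r ≥ 1, ∑_{k=1}^{n−r} ∑_{(u_1,…,u_k)} r^{u_1} u_1^{u_2} ⋯ u_{k−1}^{u_k} · (n−r)!/(u_1! u_2! ⋯ u_k!) = r · n^{n−r−1}, where the inner sum is over all k-tuples of strictly positive integers (u_1,…,u_k) with u_1+⋯+u_k = n−r. -/
/-!
Splitting off the first part `c` of a composition turns the sum `S(a, m)` (with `r = a`,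
`n - r = m`) into the recursion `S(a, m + 1) = ∑_c C(m + 1, c) a^c S(c, m + 1 - c)`, where
`S(c, 0) = 1`. The forest count `a (a + m)^(m - 1)` satisfies the same recursion: this is Abel's
identity, which becomes the binomial expansion of `a (a + m + 1)^m` after
`(m + 1) C(m, j) = C(m + 1, j + 1) (j + 1)`.
-/

/-- The compositions of `m` into `k` strictly positive parts `(u_1, …, u_k)`
(as functions `Fin k → ℕ`, `u i` being `u_{i+1}`). -/
def compositions (k m : ℕ) : Finset (Fin k → ℕ) :=
  (Finset.Nat.antidiagonalTuple k m).filter fun u => ∀ i, 1 ≤ u i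

/-- The chain `r^{u_1} u_1^{u_2} ⋯ u_{k−1}^{u_k}`. -/
def chainN (r k : ℕ) (u : Fin k → ℕ) : ℕ :=
  ∏ i : Fin k,
    (if (i : ℕ) = 0 then r
      else u ⟨(i : ℕ) - 1, lt_of_le_of_lt (Nat.sub_le _ _) i.isLt⟩) ^ u i

lemma mem_compositions {k m : ℕ} {u : Fin k → ℕ} :
    u ∈ compositions k m ↔ ∑ i, u i = m ∧ ∀ i, 1 ≤ u i := by
  simp [compositions, Finset.Nat.mem_antidiagonalTuple]

lemma compositions_eq_empty_of_lt {k m : ℕ} (h : m < k) : compositions k m = ∅ := by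
  refine Finset.eq_empty_of_forall_notMem fun u hu => ?_
  obtain ⟨hsum, hpos⟩ := mem_compositions.mp hu
  have : k ≤ m := by
    simpa [hsum] using Finset.card_nsmul_le_sum Finset.univ u 1 fun i _ => hpos i
  omega

lemma compositions_zero_zero : compositions 0 0 = {![]} := by
  simp [compositions, Finset.Nat.antidiagonalTuple_zero_zero]

lemma compositions_zero_succ (m : ℕ) : compositions 0 (m + 1) = ∅ := by
  simp [compositions, Finset.Nat.antidiagonalTuple_zero_succ]

lemma chainN_cons (a c : ℕ) {k : ℕ} (v : Fin k → ℕ) :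
    chainN a (k + 1) (Fin.cons c v) = a ^ c * chainN c k v := by
  simp only [chainN, Fin.prod_univ_succ, Fin.val_zero, if_true, Fin.cons_zero, Fin.val_succ,
    Nat.add_sub_cancel, Fin.cons_succ, Nat.add_one_ne_zero, if_false]
  congr 1
  refine Finset.prod_congr rfl fun ⟨j, hj⟩ _ => ?_
  cases j <;> rfl

lemma multinomial_univ_cons {k : ℕ} (c : ℕ) (v : Fin k → ℕ) :
    Nat.multinomial Finset.univ (Fin.cons c v : Fin (k + 1) → ℕ) =
      (c + ∑ i, v i).choose c * Nat.multinomial Finset.univ v := by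
  rw [Fin.univ_succ, Nat.multinomial_cons]
  simp [Nat.multinomial, Finset.sum_map, Finset.prod_map]

lemma sum_compositions_succ {M : Type*} [AddCommMonoid M] (k m : ℕ)
    (F : (Fin (k + 1) → ℕ) → M) :
    ∑ u ∈ compositions (k + 1) m, F u =
      ∑ c ∈ Finset.Icc 1 m, ∑ v ∈ compositions k (m - c), F (Fin.cons c v) := by
  rw [Finset.sum_sigma']
  refine (Finset.sum_bij' (fun p _ => Fin.cons p.1 p.2) (fun u _ => ⟨u 0, Fin.tail u⟩)
    ?_ ?_ (fun _ _ => by simp) (fun u _ => Fin.cons_self_tail u) (fun _ _ => rfl)).symm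
  · rintro ⟨c, v⟩ hcv
    simp only [Finset.mem_sigma, Finset.mem_Icc, mem_compositions] at hcv ⊢
    obtain ⟨⟨hc, hcm⟩, hsum, hpos⟩ := hcv
    refine ⟨by rw [Fin.sum_cons, hsum]; omega, Fin.cases (by simpa using hc) fun j => ?_⟩
    simpa using hpos j
  · intro u hu
    obtain ⟨hsum, hpos⟩ := mem_compositions.mp hu
    rw [Fin.sum_univ_succ] at hsum
    simp only [Finset.mem_sigma, Finset.mem_Icc, mem_compositions, Fin.tail]
    exact ⟨⟨hpos 0, by omega⟩, by omega, fun j => hpos j.succ⟩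

def chainSum (a k m : ℕ) : ℕ :=
  ∑ u ∈ compositions k m, chainN a k u * Nat.multinomial Finset.univ u

lemma chainSum_eq_zero_of_lt {a k m : ℕ} (h : m < k) : chainSum a k m = 0 := by
  simp [chainSum, compositions_eq_empty_of_lt h]

lemma chainSum_zero_zero (a : ℕ) : chainSum a 0 0 = 1 := by
  simp [chainSum, compositions_zero_zero, chainN]

lemma chainSum_zero_succ (a m : ℕ) : chainSum a 0 (m + 1) = 0 := by
  simp [chainSum, compositions_zero_succ]

lemma chainSum_succ (a k m : ℕ) :
    chainSum a (k + 1) m = ∑ c ∈ Finset.Icc 1 m, m.choose c * a ^ c * chainSum c k (m - c) := by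
  rw [chainSum, sum_compositions_succ]
  refine Finset.sum_congr rfl fun c hc => ?_
  rw [chainSum, Finset.mul_sum]
  refine Finset.sum_congr rfl fun v hv => ?_
  rw [chainN_cons, multinomial_univ_cons, (mem_compositions.mp hv).1,
    Nat.add_sub_cancel' (Finset.mem_Icc.mp hc).2]
  ring

/-- Including `k = 0` (the empty composition of `0`) makes `totalChainSum a 0 = 1`,
the value the recursion on the first part needs. -/
def totalChainSum (a m : ℕ) : ℕ := ∑ k ∈ Finset.range (m + 1), chainSum a k m

lemma sum_range_chainSum {a m N : ℕ} (h : m ≤ N) :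
    ∑ k ∈ Finset.range (N + 1), chainSum a k m = totalChainSum a m :=
  (Finset.sum_subset (Finset.range_subset_range.mpr (by omega)) fun k _ hk =>
    chainSum_eq_zero_of_lt (by simpa using hk)).symm

lemma totalChainSum_zero (a : ℕ) : totalChainSum a 0 = 1 := by
  simp [totalChainSum, chainSum_zero_zero]

lemma totalChainSum_succ (a m : ℕ) :
    totalChainSum a (m + 1) =
      ∑ j ∈ Finset.range (m + 1),
        (m + 1).choose (j + 1) * a ^ (j + 1) * totalChainSum (j + 1) (m - j) := by
  rw [totalChainSum, Finset.sum_range_succ', chainSum_zero_succ, add_zero]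
  simp only [chainSum_succ, Finset.sum_comm (s := Finset.range (m + 1)), ← Finset.mul_sum]
  rw [← Finset.Ico_add_one_right_eq_Icc, Finset.sum_Ico_eq_sum_range]
  refine Finset.sum_congr (by simp) fun j hj => ?_
  rw [add_comm 1 j, show m + 1 - (j + 1) = m - j by omega,
    sum_range_chainSum (by omega)]

/-- Multiplying by `a + m` makes the closed form `a (a + m)^(m - 1)` valid at `m = 0` too,
so the induction needs no case split. -/
theorem totalChainSum_mul_add (a m : ℕ) : totalChainSum a m * (a + m) = a * (a + m) ^ m := by
  induction m using Nat.strong_induction_on generalizing a with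
  | _ m ih =>
    rcases m with _ | m
    · simp [totalChainSum_zero]
    have term (j : ℕ) (hj : j ≤ m) :
        (m + 1).choose (j + 1) * a ^ (j + 1) * totalChainSum (j + 1) (m - j) =
          a ^ (j + 1) * (m + 1) ^ (m - j) * m.choose j := by
      have hj' := ih (m - j) (by omega) (j + 1)
      rw [show j + 1 + (m - j) = m + 1 by omega] at hj'
      refine Nat.eq_of_mul_eq_mul_right (Nat.succ_pos m) ?_
      calc (m + 1).choose (j + 1) * a ^ (j + 1) * totalChainSum (j + 1) (m - j) * (m + 1)
          = (m + 1).choose (j + 1) * a ^ (j + 1) * ((j + 1) * (m + 1) ^ (m - j)) := by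
            rw [mul_assoc _ (totalChainSum _ _), hj']
        _ = (m + 1).choose (j + 1) * (j + 1) * a ^ (j + 1) * (m + 1) ^ (m - j) := by ring
        _ = a ^ (j + 1) * (m + 1) ^ (m - j) * m.choose j * (m + 1) := by
            rw [← Nat.add_one_mul_choose_eq]; ring
    have hsucc : totalChainSum a (m + 1) = a * (a + (m + 1)) ^ m := by
      rw [totalChainSum_succ, add_pow, Finset.mul_sum]
      refine Finset.sum_congr rfl fun j hj => ?_
      rw [term j (Nat.lt_succ_iff.mp (Finset.mem_range.mp hj)), Nat.cast_id]
      ring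
    rw [hsucc, pow_succ]
    ring

theorem sum_chain_multinomial_eq_forest_count_general (n r : ℕ) (hrn : r + 1 ≤ n) :
    ∑ k ∈ Finset.Icc 1 (n - r), ∑ u ∈ compositions k (n - r),
        chainN r k u * Nat.multinomial Finset.univ u =
      r * n ^ (n - r - 1) := by
  obtain ⟨m, rfl⟩ : ∃ m, n = r + (m + 1) := ⟨n - r - 1, by omega⟩
  have hsplit : ∑ k ∈ Finset.Icc 1 (m + 1), chainSum r k (m + 1) = totalChainSum r (m + 1) := by
    refine Finset.sum_subset (fun k hk => ?_) fun k hk hk' => ?_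
    · simp only [Finset.mem_Icc, Finset.mem_range] at hk ⊢; omega
    · obtain rfl : k = 0 := by simp only [Finset.mem_Icc, Finset.mem_range] at hk hk'; omega
      exact chainSum_zero_succ r m
  have hclosed : totalChainSum r (m + 1) * (r + (m + 1)) =
      r * (r + (m + 1)) ^ m * (r + (m + 1)) := by
    rw [totalChainSum_mul_add, pow_succ, mul_assoc]
  simp only [Nat.add_sub_cancel_left, Nat.add_sub_cancel]
  exact hsplit.trans (Nat.eq_of_mul_eq_mul_right (by omega) hclosed)

/-- for `n > r ≥ 1`,
`∑_{k=1}^{n−r} ∑_{(u_1,…,u_k)} r^{u_1} u_1^{u_2} ⋯ u_{k−1}^{u_k} (n−r)!/(u_1!⋯u_k!) = r n^{n−r−1}`,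
the inner sum being over the compositions of `n − r` into `k` strictly positive parts. -/
theorem sum_chain_multinomial_eq_forest_count (n r : ℕ) (hr : 1 ≤ r) (hrn : r + 1 ≤ n) :
    ∑ k ∈ Finset.Icc 1 (n - r), ∑ u ∈ compositions k (n - r),
        chainN r k u * Nat.multinomial Finset.univ u =
      r * n ^ (n - r - 1) :=
  sum_chain_multinomial_eq_forest_count_general n r hrn
end
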